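/- For every u ∈ H one has E(u) ≥ sup_{x₁, x₂ ∈ (0,1), x₁ ≠ x₂} ( G(u'(x₁)) − G(u'(x₂)) )² / |x₁ − x₂|. -/

import Mathlib

open MeasureTheory Set Filter Topology

noncomputable section

/-- Membership in `H = W^{2,2}(0,1) ∩ W₀^{1,2}(0,1)`: `u1` is the (continuous) derivative of
`u` on `[0,1]`, `u1` is absolutely continuous with (integrable) derivative `u2 ∈ L²(0,1)`,
and `u(0) = u(1) = 0`. -/
def MemH (u u1 u2 : ℝ → ℝ) : Prop :=
  (∀ x ∈ Icc (0:ℝ) 1, HasDerivWithinAt u (u1 x) (Icc 0 1) x) ∧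
  (∀ x ∈ Icc (0:ℝ) 1, u1 x = u1 0 + ∫ t in (0:ℝ)..x, u2 t) ∧
  IntegrableOn u2 (Icc (0:ℝ) 1) ∧
  IntegrableOn (fun x => (u2 x) ^ 2) (Icc (0:ℝ) 1) ∧
  u 0 = 0 ∧ u 1 = 0

/-- Membership in the obstacle set `C = { u ∈ H : u ≥ ψ a.e. }`. -/
def MemC (ψ : ℝ → ℝ) (u u1 u2 : ℝ → ℝ) : Prop :=
  MemH u u1 u2 ∧ ∀ᵐ x ∂(volume.restrict (Icc (0:ℝ) 1)), ψ x ≤ u x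

/-- The inner product of `H`: `(u,v) = ∫₀¹ u'' v''` (in terms of the second derivatives). -/
def Hip (u2 v2 : ℝ → ℝ) : ℝ := ∫ x in (0:ℝ)..1, u2 x * v2 x

/-- The norm of `H`: `‖u‖ = (∫₀¹ (u'')²)^{1/2}` (in terms of the second derivative). -/
def Hnorm (u2 : ℝ → ℝ) : ℝ := Real.sqrt (∫ x in (0:ℝ)..1, (u2 x) ^ 2)

/-- The elastic (Willmore / Euler) bending energy `E(u) = ∫₀¹ u''²/(1+u'²)^{5/2}`. -/
def elE (u1 u2 : ℝ → ℝ) : ℝ :=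
  ∫ x in (0:ℝ)..1, (u2 x) ^ 2 / (1 + (u1 x) ^ 2) ^ ((5:ℝ)/2)

/-- `G(z) = ∫₀^z (1 + w²)^{-5/4} dw`. -/
def Gfun (z : ℝ) : ℝ := ∫ w in (0:ℝ)..z, (1 + w ^ 2) ^ (-(5:ℝ)/4)

/-!
With `g := G'`, the energy is `E(u) = ∫₀¹ (g(u') u'')²`. Since `u'` is absolutely continuous and
`G` is Lipschitz, `G ∘ u'` is absolutely continuous with derivative `g(u') u''` a.e., so
`G(u'(x₁)) - G(u'(x₂)) = ∫_{x₂}^{x₁} g(u') u''`. Cauchy–Schwarz on `[x₂, x₁]` bounds the square of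
this by `|x₁ - x₂| ∫_{x₂}^{x₁} (g(u') u'')² ≤ |x₁ - x₂| E(u)`.
-/

open scoped NNReal

theorem LipschitzWith.comp_absolutelyContinuousOnInterval {X Y : Type*} [PseudoMetricSpace X]
    [PseudoMetricSpace Y] {φ : X → Y} {K : ℝ≥0} (hφ : LipschitzWith K φ) {f : ℝ → X} {a b : ℝ}
    (hf : AbsolutelyContinuousOnInterval f a b) : AbsolutelyContinuousOnInterval (φ ∘ f) a b := by
  apply squeeze_zero (fun _ ↦ Finset.sum_nonneg fun _ _ ↦ dist_nonneg) (fun E ↦ ?_)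
    (by simpa using Tendsto.const_mul (K : ℝ) hf)
  rw [Finset.mul_sum]
  exact Finset.sum_le_sum fun _ _ ↦ hφ.dist_le_mul _ _

theorem AbsolutelyContinuousOnInterval.integral_comp_mul_eq_sub {f f' φ φ' : ℝ → ℝ} {a b : ℝ}
    {K : ℝ≥0} (hf : AbsolutelyContinuousOnInterval f a b)
    (hf' : ∀ᵐ x, x ∈ uIcc a b → HasDerivAt f (f' x) x)
    (hφ : ∀ y, HasDerivAt φ (φ' y) y) (hφK : LipschitzWith K φ) :
    ∫ x in a..b, φ' (f x) * f' x = φ (f b) - φ (f a) := by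
  have hFTC := (hφK.comp_absolutelyContinuousOnInterval hf).integral_deriv_eq_sub
  rw [Function.comp_apply, Function.comp_apply] at hFTC
  rw [← hFTC]
  refine intervalIntegral.integral_congr_ae ?_
  filter_upwards [hf'] with x hx hxab
  exact (((hφ (f x)).comp x (hx (uIoc_subset_uIcc hxab))).deriv).symm

theorem absolutelyContinuousOnInterval_const_add_integral {f : ℝ → ℝ} {a b : ℝ} (y : ℝ)
    (hf : IntervalIntegrable f volume a b) :
    AbsolutelyContinuousOnInterval (fun x ↦ y + ∫ t in a..x, f t) a b :=
  (LipschitzWith.const y).lipschitzOnWith.absolutelyContinuousOnInterval.add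
    (hf.absolutelyContinuousOnInterval_intervalIntegral left_mem_uIcc)

theorem continuousOn_of_eq_add_integral {u u' : ℝ → ℝ} {c d : ℝ} (hcd : c ≤ d)
    (hu' : IntegrableOn u' (Icc c d)) (hu : ∀ x ∈ Icc c d, u x = u c + ∫ t in c..x, u' t) :
    ContinuousOn u (Icc c d) := by
  have hF := absolutelyContinuousOnInterval_const_add_integral (u c)
    ((intervalIntegrable_iff_integrableOn_Icc_of_le hcd).2 hu')
  rw [← uIcc_of_le hcd]
  exact hF.continuousOn.congr fun x hx ↦ hu x (uIcc_of_le hcd ▸ hx)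

theorem comp_sub_comp_eq_integral_of_eq_add_integral {u u' φ φ' : ℝ → ℝ} {K : ℝ≥0}
    {a b c d : ℝ} (hu' : IntegrableOn u' (Icc c d))
    (hu : ∀ x ∈ Icc c d, u x = u c + ∫ t in c..x, u' t) (ha : a ∈ Icc c d) (hb : b ∈ Icc c d)
    (hφ : ∀ y, HasDerivAt φ (φ' y) y) (hφK : LipschitzWith K φ) :
    φ (u b) - φ (u a) = ∫ x in a..b, φ' (u x) * u' x := by
  have hcd : c ≤ d := ha.1.trans ha.2
  have hI : IntervalIntegrable u' volume c d :=
    (intervalIntegrable_iff_integrableOn_Icc_of_le hcd).2 hu'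
  have hsub : uIcc a b ⊆ Icc c d := by
    rw [← uIcc_of_le hcd]
    exact uIcc_subset_uIcc (uIcc_of_le hcd ▸ ha) (uIcc_of_le hcd ▸ hb)
  have hF := (absolutelyContinuousOnInterval_const_add_integral (u c) hI).mono
    (uIcc_of_le hcd ▸ hsub)
  have hF' : ∀ᵐ x, x ∈ uIcc a b → HasDerivAt (fun x ↦ u c + ∫ t in c..x, u' t) (u' x) x := by
    filter_upwards [hI.ae_hasDerivAt_integral] with x hx hxab
    exact (hx (uIcc_of_le hcd ▸ hsub hxab) c left_mem_uIcc).const_add _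
  rw [hu a ha, hu b hb, ← hF.integral_comp_mul_eq_sub hF' hφ hφK]
  refine intervalIntegral.integral_congr fun x hx ↦ ?_
  simp only [hu x (hsub hx)]

theorem sq_intervalIntegral_le {f : ℝ → ℝ} {a b : ℝ} (hab : a ≤ b)
    (hf : IntervalIntegrable f volume a b) (hf2 : IntervalIntegrable (fun x ↦ f x ^ 2) volume a b) :
    (∫ x in a..b, f x) ^ 2 ≤ (b - a) * ∫ x in a..b, f x ^ 2 := by
  rcases hab.eq_or_lt with rfl | hlt
  · simp
  have hJensen := (even_two.convexOn_pow (𝕜 := ℝ)).map_set_average_le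
    (continuous_pow 2).continuousOn isClosed_univ (by simp [(sub_pos.2 hlt).ne']) (by simp)
    (by simp) (intervalIntegrable_iff.1 hf) (intervalIntegrable_iff.1 hf2)
  rw [interval_average_eq_div, interval_average_eq_div, div_pow,
    div_le_div_iff₀ (by positivity) (sub_pos.2 hlt)] at hJensen
  nlinarith [sub_pos.2 hlt]

def gfun (w : ℝ) : ℝ := (1 + w ^ 2) ^ (-(5:ℝ)/4)

theorem one_add_sq_pos (w : ℝ) : 0 < 1 + w ^ 2 := by positivity

theorem gfun_nonneg (w : ℝ) : 0 ≤ gfun w := Real.rpow_nonneg (one_add_sq_pos w).le _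

theorem gfun_le_one (w : ℝ) : gfun w ≤ 1 :=
  Real.rpow_le_one_of_one_le_of_nonpos (by nlinarith [sq_nonneg w]) (by norm_num)

theorem continuous_gfun : Continuous gfun :=
  (by fun_prop : Continuous fun w : ℝ ↦ 1 + w ^ 2).rpow_const fun w ↦ Or.inl (one_add_sq_pos w).ne'

theorem hasDerivAt_Gfun (z : ℝ) : HasDerivAt Gfun (gfun z) z :=
  (continuous_gfun.integral_hasStrictDerivAt 0 z).hasDerivAt

theorem lipschitzWith_one_Gfun : LipschitzWith 1 Gfun := by
  refine lipschitzWith_of_nnnorm_deriv_le (fun z ↦ (hasDerivAt_Gfun z).differentiableAt) fun z ↦ ?_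
  rw [(hasDerivAt_Gfun z).deriv, ← NNReal.coe_le_coe, coe_nnnorm,
    Real.norm_of_nonneg (gfun_nonneg z)]
  exact gfun_le_one z

theorem elE_eq_integral_sq (u1 u2 : ℝ → ℝ) :
    elE u1 u2 = ∫ x in (0:ℝ)..1, (gfun (u1 x) * u2 x) ^ 2 := by
  refine intervalIntegral.integral_congr fun x _ ↦ ?_
  have hpos := one_add_sq_pos (u1 x)
  have hg2 : gfun (u1 x) ^ 2 = ((1 + u1 x ^ 2) ^ ((5:ℝ)/2))⁻¹ := by
    rw [gfun, ← Real.rpow_natCast, ← Real.rpow_mul hpos.le, ← Real.rpow_neg hpos.le]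
    norm_num
  rw [mul_pow, hg2, div_eq_inv_mul]

theorem intervalIntegrable_gfun_comp_pow_mul {u1 v : ℝ → ℝ} {a b : ℝ} (hab : a ≤ b)
    (hu1 : ContinuousOn u1 (Icc a b)) (hv : IntegrableOn v (Icc a b)) (n : ℕ) :
    IntervalIntegrable (fun x ↦ gfun (u1 x) ^ n * v x) volume a b := by
  refine (intervalIntegrable_iff_integrableOn_Icc_of_le hab).2 (hv.bdd_mul (c := 1) ?_ ?_)
  · exact ((continuous_gfun.comp_continuousOn hu1).pow n).aestronglyMeasurable measurableSet_Icc
  · refine ae_of_all _ fun x ↦ ?_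
    rw [Real.norm_of_nonneg (pow_nonneg (gfun_nonneg _) n)]
    exact pow_le_one₀ (gfun_nonneg _) (gfun_le_one _)

/-- **A standard estimate for the elastic energy.** For every `u ∈ H`,
`E(u) ≥ sup_{x₁ ≠ x₂ ∈ (0,1)} (G(u'(x₁)) - G(u'(x₂)))² / |x₁ - x₂|`. -/
theorem elastic_energy_estimate
    (u u1 u2 : ℝ → ℝ) (hu : MemH u u1 u2) :
    ∀ x₁ ∈ Ioo (0:ℝ) 1, ∀ x₂ ∈ Ioo (0:ℝ) 1, x₁ ≠ x₂ →
      (Gfun (u1 x₁) - Gfun (u1 x₂)) ^ 2 / |x₁ - x₂| ≤ elE u1 u2 := by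
  obtain ⟨-, hrep, hu2, hu2sq, -, -⟩ := hu
  set h := fun x ↦ gfun (u1 x) * u2 x with h_def
  have hu1 : ContinuousOn u1 (Icc 0 1) := continuousOn_of_eq_add_integral zero_le_one hu2 hrep
  have hh : IntervalIntegrable h volume 0 1 := by
    simpa using intervalIntegrable_gfun_comp_pow_mul zero_le_one hu1 hu2 1
  have hh2 : IntervalIntegrable (fun x ↦ h x ^ 2) volume 0 1 := by
    simpa [h_def, mul_pow] using intervalIntegrable_gfun_comp_pow_mul zero_le_one hu1 hu2sq 2
  intro x₁ hx₁ x₂ hx₂ hne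
  wlog hlt : x₂ < x₁ generalizing x₁ x₂
  · rw [sub_sq_comm, abs_sub_comm]
    exact this x₂ hx₂ x₁ hx₁ hne.symm (hne.lt_or_gt.resolve_right hlt)
  have hsub : uIcc x₂ x₁ ⊆ uIcc 0 1 := by
    rw [uIcc_of_le zero_le_one, uIcc_of_le hlt.le]
    exact Icc_subset_Icc hx₂.1.le hx₁.2.le
  rw [abs_of_pos (sub_pos.2 hlt), div_le_iff₀ (sub_pos.2 hlt), elE_eq_integral_sq,
    comp_sub_comp_eq_integral_of_eq_add_integral hu2 hrep (Ioo_subset_Icc_self hx₂)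
      (Ioo_subset_Icc_self hx₁) hasDerivAt_Gfun lipschitzWith_one_Gfun]
  calc (∫ x in x₂..x₁, h x) ^ 2 ≤ (x₁ - x₂) * ∫ x in x₂..x₁, h x ^ 2 :=
        sq_intervalIntegral_le hlt.le (hh.mono_set hsub) (hh2.mono_set hsub)
    _ ≤ (x₁ - x₂) * ∫ x in (0:ℝ)..1, h x ^ 2 := by
        gcongr
        exact intervalIntegral.integral_mono_interval hx₂.1.le hlt.le hx₁.2.le
          (ae_of_all _ fun x ↦ sq_nonneg _) hh2
    _ = _ := mul_comm _ _
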